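/- Let U be a random vector taking values in the nonnegative orthant of ℝ^n with finite, positive definite covariance matrix, Y = 𝒫(U), and suppose E[U | Y = y] = H y + c for every y ∈ ℤ^n_{≥0}, for some matrix H ∈ ℝ^{n×n} and vector c ∈ ℝ^n. Then the conditional covariance matrix of U given Y = 0 satisfies [Var(U | Y = 0)]_{ij} = c_i h_ji for all i, j ∈ [1:n] (that is, Var(U | Y = 0) equals the Hadamard product (c 1ᵀ) ⊙ Hᵀ), and consequently H is an invertible matrix. -/

import Mathlib

open MeasureTheory ProbabilityTheory

noncomputable section

/-- The probability mass function of the Poisson distribution with (real) mean `m`,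
evaluated at `k` (with the convention `0 ^ 0 = 1`). -/
def poissonP (m : ℝ) (k : ℕ) : ℝ := m ^ k * Real.exp (-m) / (Nat.factorial k)

/-- `Y = 𝒫(U)` : `U` takes values in the nonnegative orthant and, conditionally on `U = u`,
the coordinates of `Y` are independent with `Y i` Poisson distributed with mean `u i`. -/
def IsPoissonObs {Ω : Type} [MeasurableSpace Ω] (μ : Measure Ω) {n : ℕ}
    (U : Ω → Fin n → ℝ) (Y : Ω → Fin n → ℕ) : Prop :=
  Measurable U ∧ Measurable Y ∧ (∀ ω i, 0 ≤ U ω i) ∧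
    ∀ (y : Fin n → ℕ) (B : Set (Fin n → ℝ)), MeasurableSet B →
      (μ {ω | Y ω = y ∧ U ω ∈ B}).toReal
        = ∫ ω in {ω | U ω ∈ B}, ∏ i, poissonP (U ω i) (y i) ∂μ

/-- Conditional expectation of `f` given the event `A`. -/
def condExpEvent {Ω : Type} [MeasurableSpace Ω] (μ : Measure Ω) (A : Set Ω)
    (f : Ω → ℝ) : ℝ :=
  (∫ ω in A, f ω ∂μ) / (μ A).toReal

/-- The covariance matrix of a random vector `U`. -/
def covMatrix {Ω : Type} [MeasurableSpace Ω] (μ : Measure Ω) {n : ℕ}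
    (U : Ω → Fin n → ℝ) : Matrix (Fin n) (Fin n) ℝ :=
  Matrix.of fun i j =>
    ∫ ω, (U ω i - ∫ ω', U ω' i ∂μ) * (U ω j - ∫ ω', U ω' j ∂μ) ∂μ


/-!
Given `U = u`, the event `{Y = 0}` has probability `∏ᵢ e^{-uᵢ}` and `{Y = eⱼ}` has probability
`uⱼ ∏ᵢ e^{-uᵢ}`, so `E[Uⱼ g(U); Y = 0] = E[g(U); Y = eⱼ]`. With `g = 1` and `g(u) = uᵢ`, the
regression on `{Y = 0}` and `{Y = eⱼ}` gives `E[Uᵢ; Y = 0] = cᵢ p₀` and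
`E[Uᵢ Uⱼ; Y = 0] = (hᵢⱼ + cᵢ) cⱼ p₀` with `p₀ = P(Y = 0)`, hence `Var(U | Y = 0) = H diag(c)`;
this matrix is symmetric, so it also equals `diag(c) Hᵀ`.

If `H` were singular, some `v ≠ 0` would satisfy `H diag(c) v = 0`, so `vᵀ(U - c)` would vanish
on `{Y = 0}`. Since `P(Y = 0 | U) > 0`, it then vanishes almost surely, and the covariance matrix
of `U` is degenerate in the direction `v`.
-/

open Finset
open scoped Matrix

lemma poissonP_nonneg {m : ℝ} (hm : 0 ≤ m) (k : ℕ) : 0 ≤ poissonP m k := by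
  unfold poissonP; positivity

lemma poissonP_le_one {m : ℝ} (hm : 0 ≤ m) (k : ℕ) : poissonP m k ≤ 1 :=
  calc poissonP m k = m ^ k / k.factorial * Real.exp (-m) := mul_div_right_comm _ _ _
    _ ≤ Real.exp m * Real.exp (-m) := by gcongr; exact Real.pow_div_factorial_le_exp _ hm k
    _ = 1 := by rw [← Real.exp_add, add_neg_cancel, Real.exp_zero]

lemma measurable_poissonP (k : ℕ) : Measurable fun m => poissonP m k := by
  unfold poissonP; fun_prop

lemma poissonP_zero (m : ℝ) : poissonP m 0 = Real.exp (-m) := by simp [poissonP]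

lemma poissonP_one (m : ℝ) : poissonP m 1 = m * Real.exp (-m) := by simp [poissonP]

/-- `poissonLik u y = P(Y = y | U = u)` for `Y = 𝒫(U)`. -/
def poissonLik {ι : Type*} [Fintype ι] (u : ι → ℝ) (y : ι → ℕ) : ℝ :=
  ∏ i, poissonP (u i) (y i)

section poissonLik

variable {ι : Type*} [Fintype ι]

lemma poissonLik_nonneg {u : ι → ℝ} (hu : ∀ i, 0 ≤ u i) (y : ι → ℕ) : 0 ≤ poissonLik u y :=
  prod_nonneg fun i _ => poissonP_nonneg (hu i) _

lemma poissonLik_le_one {u : ι → ℝ} (hu : ∀ i, 0 ≤ u i) (y : ι → ℕ) : poissonLik u y ≤ 1 :=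
  prod_le_one (fun i _ => poissonP_nonneg (hu i) _) fun i _ => poissonP_le_one (hu i) _

lemma measurable_poissonLik (y : ι → ℕ) : Measurable fun u : ι → ℝ => poissonLik u y :=
  Finset.measurable_prod _ fun i _ => (measurable_poissonP _).comp (measurable_pi_apply i)

lemma poissonLik_zero_pos (u : ι → ℝ) : 0 < poissonLik u 0 :=
  prod_pos fun i _ => by simpa [poissonP_zero] using Real.exp_pos _

lemma poissonLik_single [DecidableEq ι] (u : ι → ℝ) (j : ι) :
    poissonLik u (Pi.single j 1) = u j * poissonLik u 0 := by
  rw [poissonLik, poissonLik, ← mul_prod_erase _ _ (mem_univ j),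
    ← mul_prod_erase _ _ (mem_univ j),
    prod_congr rfl fun i hi => by rw [Pi.single_eq_of_ne (ne_of_mem_erase hi)]]
  simp [poissonP_one, poissonP_zero, mul_assoc]

end poissonLik

namespace IsPoissonObs

variable {Ω : Type} [MeasurableSpace Ω] {μ : Measure Ω} [IsFiniteMeasure μ] {n : ℕ}
  {U : Ω → Fin n → ℝ} {Y : Ω → Fin n → ℕ}

lemma integrable_poissonLik (hPo : IsPoissonObs μ U Y) (y : Fin n → ℕ) :
    Integrable (fun ω => poissonLik (U ω) y) μ :=
  (integrable_const (1 : ℝ)).mono' ((measurable_poissonLik y).comp hPo.1).aestronglyMeasurable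
    (ae_of_all _ fun ω => by
      rw [Real.norm_of_nonneg (poissonLik_nonneg (hPo.2.2.1 ω) y)]
      exact poissonLik_le_one (hPo.2.2.1 ω) y)

lemma map_restrict_eq_withDensity (hPo : IsPoissonObs μ U Y) (y : Fin n → ℕ) :
    (μ.restrict {ω | Y ω = y}).map U
      = (μ.map U).withDensity fun u => ENNReal.ofReal (poissonLik u y) := by
  have hlik := hPo.integrable_poissonLik y
  obtain ⟨hU, -, hpos, hlaw⟩ := hPo
  ext B hB
  rw [Measure.map_apply hU hB, Measure.restrict_apply (hU hB), withDensity_apply _ hB,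
    setLIntegral_map hB (measurable_poissonLik y).ennreal_ofReal hU,
    ← ofReal_integral_eq_lintegral_ofReal hlik.integrableOn
      (ae_of_all _ fun ω => poissonLik_nonneg (hpos ω) y),
    ← ENNReal.ofReal_toReal (measure_ne_top μ _), Set.inter_comm]
  exact congrArg ENNReal.ofReal (hlaw y B hB)

lemma setIntegral_eq_integral_mul (hPo : IsPoissonObs μ U Y) (y : Fin n → ℕ)
    {g : (Fin n → ℝ) → ℝ} (hg : Measurable g) :
    ∫ ω in {ω | Y ω = y}, g (U ω) ∂μ = ∫ ω, g (U ω) * poissonLik (U ω) y ∂μ := by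
  have hU := hPo.1
  have hlik := (measurable_poissonLik y).real_toNNReal
  calc ∫ ω in {ω | Y ω = y}, g (U ω) ∂μ
      = ∫ u, g u ∂(μ.map U).withDensity fun u => ENNReal.ofReal (poissonLik u y) := by
        rw [← hPo.map_restrict_eq_withDensity,
          integral_map hU.aemeasurable hg.aestronglyMeasurable]
    _ = ∫ u, (poissonLik u y).toNNReal • g u ∂μ.map U :=
        integral_withDensity_eq_integral_smul hlik g
    _ = ∫ ω, (poissonLik (U ω) y).toNNReal • g (U ω) ∂μ :=
        integral_map hU.aemeasurable (hlik.smul hg).aestronglyMeasurable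
    _ = ∫ ω, g (U ω) * poissonLik (U ω) y ∂μ := by
        refine integral_congr_ae (ae_of_all _ fun ω => ?_)
        dsimp only
        rw [NNReal.smul_def, Real.coe_toNNReal _ (poissonLik_nonneg (hPo.2.2.1 ω) y),
          smul_eq_mul, mul_comm]

lemma measureReal_eq_integral (hPo : IsPoissonObs μ U Y) (y : Fin n → ℕ) :
    μ.real {ω | Y ω = y} = ∫ ω, poissonLik (U ω) y ∂μ := by
  simpa using hPo.setIntegral_eq_integral_mul y (g := fun _ => 1) measurable_const

lemma measureReal_zero_pos [NeZero μ] (hPo : IsPoissonObs μ U Y) :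
    0 < μ.real {ω | Y ω = 0} := by
  have hsupp : Function.support (fun ω => poissonLik (U ω) 0) = Set.univ :=
    Set.eq_univ_of_forall fun ω => (poissonLik_zero_pos (U ω)).ne'
  rw [hPo.measureReal_eq_integral, integral_pos_iff_support_of_nonneg
    (fun ω => (poissonLik_zero_pos (U ω)).le) (hPo.integrable_poissonLik 0), hsupp]
  exact Measure.measure_univ_pos.mpr (NeZero.ne μ)

lemma setIntegral_single_eq (hPo : IsPoissonObs μ U Y) (j : Fin n)
    {g : (Fin n → ℝ) → ℝ} (hg : Measurable g) :
    ∫ ω in {ω | Y ω = Pi.single j 1}, g (U ω) ∂μ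
      = ∫ ω in {ω | Y ω = 0}, U ω j * g (U ω) ∂μ := by
  rw [hPo.setIntegral_eq_integral_mul _ hg,
    hPo.setIntegral_eq_integral_mul 0 (g := fun u => u j * g u) (by fun_prop)]
  simp only [poissonLik_single]
  congr 1 with ω
  ring

lemma ae_eq_zero_of_setIntegral_zero (hPo : IsPoissonObs μ U Y)
    {g : (Fin n → ℝ) → ℝ} (hg : Measurable g) (hg_nonneg : ∀ u, 0 ≤ g u)
    (hint : Integrable (fun ω => g (U ω)) μ) (h : ∫ ω in {ω | Y ω = 0}, g (U ω) ∂μ = 0) :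
    ∀ᵐ ω ∂μ, g (U ω) = 0 := by
  rw [hPo.setIntegral_eq_integral_mul 0 hg] at h
  have hint' : Integrable (fun ω => g (U ω) * poissonLik (U ω) 0) μ :=
    hint.mul_bdd ((measurable_poissonLik 0).comp hPo.1).aestronglyMeasurable
      (ae_of_all _ fun ω => by
        rw [Real.norm_of_nonneg (poissonLik_nonneg (hPo.2.2.1 ω) 0)]
        exact poissonLik_le_one (hPo.2.2.1 ω) 0)
  filter_upwards [(integral_eq_zero_iff_of_nonneg (fun ω =>
    mul_nonneg (hg_nonneg _) (poissonLik_zero_pos (U ω)).le) hint').1 h] with ω hω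
  exact (mul_eq_zero.1 hω).resolve_right (poissonLik_zero_pos (U ω)).ne'

end IsPoissonObs

section Moments

variable {Ω : Type} [MeasurableSpace Ω] {μ : Measure Ω}

lemma setIntegral_eq_mul_measureReal [IsFiniteMeasure μ] {A : Set Ω} {f : Ω → ℝ} {m : ℝ}
    (h : μ A ≠ 0 → condExpEvent μ A f = m) : ∫ ω in A, f ω ∂μ = m * μ.real A := by
  by_cases hA : μ A = 0
  · simp [Measure.restrict_eq_zero.mpr hA, measureReal_def, hA]
  · rw [← h hA, condExpEvent, ← measureReal_def,
      div_mul_cancel₀ _ ((measureReal_ne_zero_iff).mpr hA)]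

lemma integral_sq_sum_mul_eq_dotProduct {ι : Type*} [Fintype ι] {f : ι → Ω → ℝ}
    (hf : ∀ i, MemLp (f i) 2 μ) (v : ι → ℝ) :
    ∫ ω, (∑ i, v i * f i ω) ^ 2 ∂μ
      = v ⬝ᵥ (Matrix.of fun i j => ∫ ω, f i ω * f j ω ∂μ) *ᵥ v := by
  have hint : ∀ i j, Integrable (fun ω => v i * (f i ω * f j ω * v j)) μ := fun i j =>
    (((hf i).integrable_mul (hf j)).mul_const (v j)).const_mul (v i)
  have hexpand : ∀ ω, (∑ i, v i * f i ω) ^ 2 = ∑ i, ∑ j, v i * (f i ω * f j ω * v j) := by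
    intro ω
    rw [sq, sum_mul_sum]
    exact sum_congr rfl fun i _ => sum_congr rfl fun j _ => by ring
  simp_rw [hexpand]
  rw [integral_finsetSum _ fun i _ => integrable_finsetSum _ fun j _ => hint i j]
  refine sum_congr rfl fun i _ => ?_
  rw [integral_finsetSum _ fun j _ => hint i j, Matrix.mulVec, dotProduct, mul_sum]
  refine sum_congr rfl fun j _ => ?_
  rw [integral_const_mul, integral_mul_const]
  rfl

lemma dotProduct_covMatrix_mulVec_eq_zero [IsProbabilityMeasure μ] {n : ℕ}
    {U : Ω → Fin n → ℝ} (hmom : ∀ i, MemLp (fun ω => U ω i) 2 μ) {v a : Fin n → ℝ}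
    (h : ∀ᵐ ω ∂μ, ∑ i, v i * (U ω i - a i) = 0) :
    star v ⬝ᵥ covMatrix μ U *ᵥ v = 0 := by
  have hint : ∀ i, Integrable (fun ω => v i * (U ω i - a i)) μ := fun i =>
    (((hmom i).integrable one_le_two).sub (integrable_const _)).const_mul _
  have hmean : ∑ i, v i * (∫ ω, U ω i ∂μ - a i) = 0 := by
    have := integral_congr_ae h
    rw [integral_finsetSum _ fun i _ => hint i] at this
    simpa [integral_const_mul, integral_sub ((hmom _).integrable one_le_two)] using this
  have hcentered : ∀ᵐ ω ∂μ, (∑ i, v i * (U ω i - ∫ ω', U ω' i ∂μ)) ^ 2 = 0 := by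
    filter_upwards [h] with ω hω
    have hsplit : ∑ i, v i * (U ω i - ∫ ω', U ω' i ∂μ)
        = ∑ i, v i * (U ω i - a i) - ∑ i, v i * (∫ ω', U ω' i ∂μ - a i) := by
      rw [← sum_sub_distrib]
      exact sum_congr rfl fun i _ => by ring
    rw [hsplit, hω, hmean, sub_zero, zero_pow two_ne_zero]
  calc star v ⬝ᵥ covMatrix μ U *ᵥ v = ∫ ω, (∑ i, v i * (U ω i - ∫ ω', U ω' i ∂μ)) ^ 2 ∂μ := by
        rw [star_trivial, integral_sq_sum_mul_eq_dotProduct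
          (f := fun i ω => U ω i - ∫ ω', U ω' i ∂μ) fun i => (hmom i).sub (memLp_const _)]
        rfl
    _ = 0 := by rw [integral_congr_ae hcentered, integral_zero]

end Moments

def HasAffineCondMean {Ω : Type} [MeasurableSpace Ω] (μ : Measure Ω) {n : ℕ}
    (U : Ω → Fin n → ℝ) (Y : Ω → Fin n → ℕ) (H : Matrix (Fin n) (Fin n) ℝ) (c : Fin n → ℝ) :
    Prop :=
  ∀ y : Fin n → ℕ, μ {ω | Y ω = y} ≠ 0 → ∀ i,
    condExpEvent μ {ω | Y ω = y} (fun ω => U ω i) = ∑ j, H i j * (y j : ℝ) + c i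

namespace HasAffineCondMean

variable {Ω : Type} [MeasurableSpace Ω] {μ : Measure Ω} [IsFiniteMeasure μ] {n : ℕ}
  {U : Ω → Fin n → ℝ} {Y : Ω → Fin n → ℕ} {H : Matrix (Fin n) (Fin n) ℝ} {c : Fin n → ℝ}

lemma setIntegral_eq (hlin : HasAffineCondMean μ U Y H c) (y : Fin n → ℕ) (i : Fin n) :
    ∫ ω in {ω | Y ω = y}, U ω i ∂μ = (∑ j, H i j * (y j : ℝ) + c i) * μ.real {ω | Y ω = y} :=
  setIntegral_eq_mul_measureReal fun hy => hlin y hy i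

lemma setIntegral_zero_eq (hlin : HasAffineCondMean μ U Y H c) (i : Fin n) :
    ∫ ω in {ω | Y ω = 0}, U ω i ∂μ = c i * μ.real {ω | Y ω = 0} := by
  simpa using hlin.setIntegral_eq 0 i

lemma setIntegral_zero_mul_eq (hlin : HasAffineCondMean μ U Y H c)
    (hPo : IsPoissonObs μ U Y) (i j : Fin n) :
    ∫ ω in {ω | Y ω = 0}, U ω i * U ω j ∂μ = (H i j + c i) * c j * μ.real {ω | Y ω = 0} := by
  have hsingle : μ.real {ω | Y ω = Pi.single j 1} = c j * μ.real {ω | Y ω = 0} := by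
    simpa [hlin.setIntegral_zero_eq] using
      hPo.setIntegral_single_eq j (g := fun _ => 1) measurable_const
  calc ∫ ω in {ω | Y ω = 0}, U ω i * U ω j ∂μ
      = ∫ ω in {ω | Y ω = Pi.single j 1}, U ω i ∂μ := by
        rw [hPo.setIntegral_single_eq j (measurable_pi_apply i)]
        simp only [mul_comm]
    _ = (H i j + c i) * μ.real {ω | Y ω = Pi.single j 1} := by
        simp [hlin.setIntegral_eq, Pi.single_apply]
    _ = (H i j + c i) * c j * μ.real {ω | Y ω = 0} := by rw [hsingle, mul_assoc]

lemma setIntegral_zero_sub_mul_sub (hlin : HasAffineCondMean μ U Y H c)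
    (hPo : IsPoissonObs μ U Y) (hmom : ∀ i, MemLp (fun ω => U ω i) 2 μ) (i j : Fin n) :
    ∫ ω in {ω | Y ω = 0}, (U ω i - c i) * (U ω j - c j) ∂μ
      = H i j * c j * μ.real {ω | Y ω = 0} := by
  have hint : ∀ k, Integrable (fun ω => U ω k) (μ.restrict {ω | Y ω = 0}) := fun k =>
    ((hmom k).integrable one_le_two).integrableOn
  have hint₂ : Integrable (fun ω => U ω i * U ω j) (μ.restrict {ω | Y ω = 0}) :=
    ((hmom i).integrable_mul (hmom j)).integrableOn
  have hexpand : ∀ ω, (U ω i - c i) * (U ω j - c j)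
      = (U ω i * U ω j - c i * U ω j) - (c j * U ω i - c i * c j) := fun ω => by ring
  simp_rw [hexpand]
  rw [integral_sub, integral_sub hint₂, integral_sub, integral_const_mul, integral_const_mul,
    hlin.setIntegral_zero_mul_eq hPo, hlin.setIntegral_zero_eq, hlin.setIntegral_zero_eq,
    setIntegral_const, smul_eq_mul]
  · ring
  all_goals fun_prop

lemma condExpEvent_zero_mul_sub [NeZero μ] (hlin : HasAffineCondMean μ U Y H c)
    (hPo : IsPoissonObs μ U Y) (i j : Fin n) :
    condExpEvent μ {ω | Y ω = 0} (fun ω => U ω i * U ω j)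
        - condExpEvent μ {ω | Y ω = 0} (fun ω => U ω i)
          * condExpEvent μ {ω | Y ω = 0} (fun ω => U ω j)
      = H i j * c j := by
  have hp₀ := hPo.measureReal_zero_pos.ne'
  simp only [condExpEvent, ← measureReal_def, hlin.setIntegral_zero_mul_eq hPo,
    hlin.setIntegral_zero_eq]
  field_simp
  ring

lemma setIntegral_zero_sq_sum (hlin : HasAffineCondMean μ U Y H c)
    (hPo : IsPoissonObs μ U Y) (hmom : ∀ i, MemLp (fun ω => U ω i) 2 μ) (v : Fin n → ℝ) :
    ∫ ω in {ω | Y ω = 0}, (∑ i, v i * (U ω i - c i)) ^ 2 ∂μ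
      = μ.real {ω | Y ω = 0} * (v ⬝ᵥ (H * Matrix.diagonal c) *ᵥ v) := by
  have hcond : (Matrix.of fun i j => ∫ ω in {ω | Y ω = 0}, (U ω i - c i) * (U ω j - c j) ∂μ)
      = μ.real {ω | Y ω = 0} • (H * Matrix.diagonal c) := by
    ext i j
    simp [hlin.setIntegral_zero_sub_mul_sub hPo hmom, Matrix.mul_diagonal, mul_comm]
  rw [integral_sq_sum_mul_eq_dotProduct (f := fun i ω => U ω i - c i)
    fun i => ((hmom i).restrict _).sub (memLp_const _), hcond, Matrix.smul_mulVec,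
    dotProduct_smul, smul_eq_mul]

lemma isUnit_of_posDef_covMatrix [IsProbabilityMeasure μ] (hlin : HasAffineCondMean μ U Y H c)
    (hPo : IsPoissonObs μ U Y) (hmom : ∀ i, MemLp (fun ω => U ω i) 2 μ)
    (hcov : (covMatrix μ U).PosDef) : IsUnit H := by
  rw [Matrix.isUnit_iff_isUnit_det, isUnit_iff_ne_zero]
  intro hdet
  obtain ⟨v, hv, hHv⟩ := Matrix.exists_mulVec_eq_zero_iff.mpr
    (show (H * Matrix.diagonal c).det = 0 by rw [Matrix.det_mul, hdet, zero_mul])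
  have hZ : ∫ ω in {ω | Y ω = 0}, (∑ i, v i * (U ω i - c i)) ^ 2 ∂μ = 0 := by
    rw [hlin.setIntegral_zero_sq_sum hPo hmom, hHv, dotProduct_zero, mul_zero]
  have hZ_int : Integrable (fun ω => (∑ i, v i * (U ω i - c i)) ^ 2) μ :=
    (memLp_finsetSum _ fun i _ =>
      ((hmom i).sub (memLp_const (c i))).const_mul (v i)).integrable_sq
  have hae := hPo.ae_eq_zero_of_setIntegral_zero (g := fun u => (∑ i, v i * (u i - c i)) ^ 2)
    (by fun_prop) (fun u => sq_nonneg _) hZ_int hZ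
  exact (hcov.dotProduct_mulVec_pos hv).ne' <| dotProduct_covMatrix_mulVec_eq_zero hmom <|
    hae.mono fun ω hω => pow_eq_zero_iff two_ne_zero |>.mp hω

end HasAffineCondMean

/-- if `U` is nondegenerate, `Y = 𝒫(U)` and `E[U | Y = y] = H y + c`
for all `y`, then `[Var(U | Y = 0)]_{ij} = c_i h_{ji}` (i.e. `Var(U|Y=0) = (c 1ᵀ) ⊙ Hᵀ`),
and consequently `H` is invertible. -/
theorem stmt6 {Ω : Type} [MeasurableSpace Ω] (μ : Measure Ω) [IsProbabilityMeasure μ]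
    {n : ℕ} (U : Ω → Fin n → ℝ) (Y : Ω → Fin n → ℕ)
    (hPo : IsPoissonObs μ U Y)
    (hmom : ∀ i, MemLp (fun ω => U ω i) 2 μ)
    (hcov : (covMatrix μ U).PosDef)
    (H : Matrix (Fin n) (Fin n) ℝ) (c : Fin n → ℝ)
    (hlin : ∀ y : Fin n → ℕ, μ {ω | Y ω = y} ≠ 0 → ∀ i,
      condExpEvent μ {ω | Y ω = y} (fun ω => U ω i) = ∑ j, H i j * (y j : ℝ) + c i) :
    (∀ i j : Fin n,
        condExpEvent μ {ω | Y ω = (0 : Fin n → ℕ)} (fun ω => U ω i * U ω j)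
            - condExpEvent μ {ω | Y ω = (0 : Fin n → ℕ)} (fun ω => U ω i)
              * condExpEvent μ {ω | Y ω = (0 : Fin n → ℕ)} (fun ω => U ω j)
          = c i * H j i)
      ∧ IsUnit H := by
  have hlin : HasAffineCondMean μ U Y H c := hlin
  refine ⟨fun i j => ?_, hlin.isUnit_of_posDef_covMatrix hPo hmom hcov⟩
  have hswap : (fun ω => U ω i * U ω j) = fun ω => U ω j * U ω i := funext fun ω => mul_comm _ _
  rw [hswap, mul_comm (condExpEvent _ _ _), hlin.condExpEvent_zero_mul_sub hPo j i, mul_comm]
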